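/- arXiv:2007.05755 — 2 statements merged into one kernel-verified Lean document; each statement's English description precedes it below -/
import Mathlib

section
/- Let n be a positive integer, 0 < α < 1, ω > 0, and x : ℝ → ℝ continuously differentiable. Then for every t ≥ t₀ and m ≥ 1: D̃(x^{2^m})(t) ≤ 2 x^{2^{m-1}}(t) · D̃(x^{2^{m-1}})(t), where D̃ is the short memory fractional derivative with lower limit max(t₀, t-ω). -/
/-!
Since `(g²)' = 2 g g'`, the gap `2 g(t) D̃g(t) - D̃(g²)(t)` is `2 / Γ(1-α)` times
`∫_a^t (t-τ)^(-α) g'(τ) (g(t) - g(τ)) dτ`, and `g'(τ) (g(t) - g(τ)) = -F'(τ) / 2` for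
`F = (g(t) - g)² ≥ 0`. Integrating by parts on `[a, s]` against the increasing weight
`(t-τ)^(-α)` bounds the partial integral below by `-(t-s)^(-α) F(s)`, which is
`O((t-s)^(2-α))` and so vanishes as `s → t`. Apply this to `g = x^(2^(m-1))`.
-/

open MeasureTheory

/-- Short memory fractional derivative with window ω and base point t₀. -/
noncomputable def smD (α ω t₀ : ℝ) (f : ℝ → ℝ) (t : ℝ) : ℝ :=
  (1 / Real.Gamma (1 - α)) * ∫ τ in (max t₀ (t - ω))..t, (t - τ) ^ (-α) * deriv f τ

open Filter Set Topology

theorem intervalIntegrable_sub_rpow_neg_mul {α a t : ℝ} (hα : α < 1) {φ : ℝ → ℝ}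
    (hφ : ContinuousOn φ (uIcc a t)) :
    IntervalIntegrable (fun τ => (t - τ) ^ (-α) * φ τ) volume a t := by
  have hpow := (intervalIntegral.intervalIntegrable_rpow' (a := t - a) (b := t - t)
    (r := -α) (by linarith)).comp_sub_left t
  simp only [sub_sub_cancel] at hpow
  exact hpow.mul_continuousOn hφ

theorem integral_mul_deriv_nonpos_of_tendsto {k k' F F' : ℝ → ℝ} {a t : ℝ} (hat : a < t)
    (hk : ∀ τ ∈ Ico a t, HasDerivAt k (k' τ) τ) (hk'c : ContinuousOn k' (Ico a t))
    (hk'0 : ∀ τ ∈ Ico a t, 0 ≤ k' τ) (hka : 0 ≤ k a)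
    (hF : ∀ τ ∈ Ico a t, HasDerivAt F (F' τ) τ) (hF'c : ContinuousOn F' (Ico a t))
    (hF0 : ∀ τ ∈ Ico a t, 0 ≤ F τ)
    (hint : IntervalIntegrable (fun τ => k τ * F' τ) volume a t)
    (hlim : Tendsto (fun s => k s * F s) (𝓝[<] t) (𝓝 0)) :
    ∫ τ in a..t, k τ * F' τ ≤ 0 := by
  have hprim : Tendsto (fun s => ∫ τ in a..s, k τ * F' τ) (𝓝[<] t)
      (𝓝 (∫ τ in a..t, k τ * F' τ)) := by
    have hIoo : Ioo a t ⊆ uIcc a t := Ioo_subset_Icc_self.trans Icc_subset_uIcc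
    exact ((intervalIntegral.continuousOn_primitive_interval' hint left_mem_uIcc) t
      right_mem_uIcc).mono_of_mem_nhdsWithin (mem_of_superset (Ioo_mem_nhdsLT hat) hIoo)
  have hbound : ∀ s ∈ Ioo a t, ∫ τ in a..s, k τ * F' τ ≤ k s * F s := by
    intro s hs
    have hsub : Icc a s ⊆ Ico a t := Icc_subset_Ico_right hs.2
    have hsub' : uIcc a s ⊆ Ico a t := uIcc_of_le hs.1.le ▸ hsub
    rw [intervalIntegral.integral_mul_deriv_eq_deriv_mul (fun τ hτ => hk τ (hsub' hτ))
      (fun τ hτ => hF τ (hsub' hτ)) ((hk'c.mono hsub').intervalIntegrable)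
      ((hF'c.mono hsub').intervalIntegrable)]
    have hk'F : 0 ≤ ∫ τ in a..s, k' τ * F τ :=
      intervalIntegral.integral_nonneg hs.1.le fun τ hτ =>
        mul_nonneg (hk'0 τ (hsub hτ)) (hF0 τ (hsub hτ))
    linarith [mul_nonneg hka (hF0 a ⟨le_rfl, hat⟩)]
  refine le_of_tendsto_of_tendsto hprim hlim ?_
  filter_upwards [Ioo_mem_nhdsLT hat] with s hs using hbound s hs

theorem tendsto_sub_rpow_neg_mul_sq_sub {α t : ℝ} (hα : α < 2) {g : ℝ → ℝ}
    (hg : DifferentiableAt ℝ g t) :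
    Tendsto (fun s => (t - s) ^ (-α) * (g t - g s) ^ 2) (𝓝[<] t) (𝓝 0) := by
  have hslope : Tendsto (slope g t) (𝓝[<] t) (𝓝 (deriv g t)) :=
    hg.hasDerivAt.tendsto_slope.mono_left (nhdsWithin_mono _ fun s hs => ne_of_lt hs)
  have hpow : Tendsto (fun s => (t - s) ^ (2 - α)) (𝓝[<] t) (𝓝 0) := by
    have hc : ContinuousAt (fun s => (t - s) ^ (2 - α)) t :=
      ((continuous_const.sub continuous_id).continuousAt).rpow_const (Or.inr (by linarith))
    simpa [ContinuousAt, Real.zero_rpow (by linarith : (2 - α) ≠ 0)] using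
      hc.tendsto.mono_left nhdsWithin_le_nhds
  have := (hslope.pow 2).mul hpow
  rw [mul_zero] at this
  refine this.congr' ?_
  filter_upwards [self_mem_nhdsWithin] with s (hs : s < t)
  have hts : 0 < t - s := sub_pos.mpr hs
  rw [slope_def_field, Real.rpow_sub hts, Real.rpow_two, Real.rpow_neg hts.le]
  have hst : s - t ≠ 0 := sub_ne_zero.mpr hs.ne
  field_simp
  ring

theorem integral_sub_rpow_neg_mul_deriv_mul_sub_nonneg {α a t : ℝ} (hα0 : 0 ≤ α)
    (hα1 : α < 1) (hat : a ≤ t) {g : ℝ → ℝ} (hg : ContDiff ℝ 1 g) :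
    0 ≤ ∫ τ in a..t, (t - τ) ^ (-α) * (deriv g τ * (g t - g τ)) := by
  rcases hat.eq_or_lt with rfl | hat
  · simp
  have hgd : ∀ τ, HasDerivAt g (deriv g τ) τ := fun τ =>
    (hg.differentiable one_ne_zero τ).hasDerivAt
  have hgc : Continuous g := hg.continuous
  have hg'c : Continuous (deriv g) := hg.continuous_deriv le_rfl
  have hF'c : Continuous fun τ => -2 * (deriv g τ * (g t - g τ)) := by fun_prop
  have hpos : ∀ τ ∈ Ico a t, t - τ ≠ 0 := fun τ hτ => (sub_pos.mpr hτ.2).ne'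
  have key := integral_mul_deriv_nonpos_of_tendsto (k := fun τ => (t - τ) ^ (-α))
    (k' := fun τ => α * (t - τ) ^ (-α - 1)) (F := fun τ => (g t - g τ) ^ 2)
    (F' := fun τ => -2 * (deriv g τ * (g t - g τ))) hat
    (fun τ hτ => (((hasDerivAt_id' τ).const_sub t).rpow_const (Or.inl (hpos τ hτ))).congr_deriv
      (by ring))
    (continuousOn_const.mul ((continuousOn_const.sub continuousOn_id).rpow_const
      fun τ hτ => Or.inl (hpos τ hτ)))
    (fun τ hτ => mul_nonneg hα0 (Real.rpow_nonneg (sub_pos.mpr hτ.2).le _))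
    (Real.rpow_nonneg (sub_pos.mpr hat).le _)
    (fun τ _ => (((hgd τ).const_sub (g t)).fun_pow 2).congr_deriv (by push_cast; ring))
    hF'c.continuousOn
    (fun τ _ => sq_nonneg _)
    (intervalIntegrable_sub_rpow_neg_mul hα1 hF'c.continuousOn)
    (by simpa using tendsto_sub_rpow_neg_mul_sq_sub (by linarith) (hgd t).differentiableAt)
  simp_rw [mul_left_comm _ (-2 : ℝ), intervalIntegral.integral_const_mul] at key
  linarith

theorem smD_sq_le {α ω t₀ t : ℝ} (hα0 : 0 ≤ α) (hα1 : α < 1) (hω : 0 ≤ ω) (ht : t₀ ≤ t)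
    {g : ℝ → ℝ} (hg : ContDiff ℝ 1 g) :
    smD α ω t₀ (fun τ => g τ ^ 2) t ≤ 2 * g t * smD α ω t₀ g t := by
  set a := max t₀ (t - ω)
  have hgd : ∀ τ, DifferentiableAt ℝ g τ := hg.differentiable one_ne_zero
  have hg'c : ContinuousOn (deriv g) (uIcc a t) := (hg.continuous_deriv le_rfl).continuousOn
  have hsq : ContinuousOn (fun τ => 2 * g τ * deriv g τ) (uIcc a t) :=
    ((continuous_const.mul hg.continuous).continuousOn).mul hg'c
  have hgap : 2 * g t * (∫ τ in a..t, (t - τ) ^ (-α) * deriv g τ)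
      - ∫ τ in a..t, (t - τ) ^ (-α) * (2 * g τ * deriv g τ)
      = 2 * ∫ τ in a..t, (t - τ) ^ (-α) * (deriv g τ * (g t - g τ)) := by
    rw [← intervalIntegral.integral_const_mul, ← intervalIntegral.integral_sub
      ((intervalIntegrable_sub_rpow_neg_mul hα1 hg'c).const_mul _)
      (intervalIntegrable_sub_rpow_neg_mul hα1 hsq), ← intervalIntegral.integral_const_mul]
    congr 1 with τ
    ring
  have hnonneg := integral_sub_rpow_neg_mul_deriv_mul_sub_nonneg hα0 hα1
    (max_le ht (by linarith) : a ≤ t) hg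
  have hΓ : 0 ≤ 1 / Real.Gamma (1 - α) := by
    have := Real.Gamma_pos_of_pos (by linarith : 0 < 1 - α); positivity
  have hderiv : deriv (fun τ => g τ ^ 2) = fun τ => 2 * g τ * deriv g τ :=
    funext fun τ => by simp [hgd τ]
  simp only [smD, hderiv]
  rw [mul_left_comm (2 * g t)]
  exact mul_le_mul_of_nonneg_left (by linarith) hΓ

theorem stmt14_general (α ω t₀ t : ℝ) (hα0 : 0 < α) (hα1 : α < 1)
    (hω : 0 < ω) (x : ℝ → ℝ) (hx : ContDiff ℝ 1 x) (ht : t₀ ≤ t)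
    (m : ℕ) (hm : 1 ≤ m) :
    smD α ω t₀ (fun τ => x τ ^ (2 ^ m)) t
      ≤ 2 * (x t) ^ (2 ^ (m - 1)) * smD α ω t₀ (fun τ => x τ ^ (2 ^ (m - 1))) t := by
  obtain ⟨k, rfl⟩ : ∃ k, m = k + 1 := ⟨m - 1, by omega⟩
  simp only [add_tsub_cancel_right, pow_succ, pow_mul]
  exact smD_sq_le hα0.le hα1 hω.le ht (hx.pow _)

theorem stmt14 (n : ℕ) (hn : 0 < n) (α ω t₀ t : ℝ) (hα0 : 0 < α) (hα1 : α < 1)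
    (hω : 0 < ω) (x : ℝ → ℝ) (hx : ContDiff ℝ 1 x) (ht : t₀ ≤ t)
    (m : ℕ) (hm : 1 ≤ m) :
    smD α ω t₀ (fun τ => x τ ^ (2 ^ m)) t
      ≤ 2 * (x t) ^ (2 ^ (m - 1)) * smD α ω t₀ (fun τ => x τ ^ (2 ^ (m - 1))) t :=
  stmt14_general α ω t₀ t hα0 hα1 hω x hx ht m hm
end

section
/- Let 0 < α < 1, ω > 0, t₀ ∈ ℝ, and x : [t₀-ω, ∞) → ℝ continuously differentiable. Then for t > t₀ + ω: ᶜD^α_{t₀} x(t) = D̃x(t) + (1/Γ(1-α)) [ x(t-ω)/ω^α − x(t₀)/(t-t₀)^α − α ∫_{t₀}^{t-ω} (t-τ)^{-α-1} x(τ) dτ ], where ᶜD^α_{t₀} is the Caputo derivative with lower limit t₀ and D̃ is the short memory derivative with lower limit t-ω. -/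
/-!
On `[t₀, t - ω]` the kernel `(t - τ) ^ (-α)` is smooth, so integrating by parts there moves the
derivative from `x` onto the kernel and produces the boundary terms; the remaining piece of the
Caputo integral, over `[t - ω, t]`, is the short memory derivative.
-/

open MeasureTheory Set

section PowerKernel

variable {α t a b : ℝ}

theorem hasDerivAt_sub_rpow_neg {τ : ℝ} (hτ : τ < t) :
    HasDerivAt (fun s => (t - s) ^ (-α)) (α * (t - τ) ^ (-α - 1)) τ := by
  have h := ((hasDerivAt_id' τ).const_sub t).rpow_const (p := -α) (Or.inl (sub_pos.2 hτ).ne')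
  convert h using 1
  ring

theorem intervalIntegrable_sub_rpow_mul {r : ℝ} (hr : -1 < r) {g : ℝ → ℝ}
    (hg : ContinuousOn g (uIcc a b)) :
    IntervalIntegrable (fun τ => (t - τ) ^ r * g τ) volume a b := by
  have hkernel : IntervalIntegrable (fun τ => (t - τ) ^ r) volume a b := by
    simpa using
      (intervalIntegral.intervalIntegrable_rpow' (a := t - a) (b := t - b) hr).comp_sub_left t
  exact hkernel.mul_continuousOn hg

theorem integral_sub_rpow_neg_mul_deriv {f f' : ℝ → ℝ} (hab : a ≤ b) (hbt : b < t)
    (hf : ∀ τ ∈ Icc a b, HasDerivAt f (f' τ) τ) (hf' : IntervalIntegrable f' volume a b) :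
    ∫ τ in a..b, (t - τ) ^ (-α) * f' τ
      = f b / (t - b) ^ α - f a / (t - a) ^ α - α * ∫ τ in a..b, (t - τ) ^ (-α - 1) * f τ := by
  have hlt : ∀ τ ∈ Icc a b, τ < t := fun τ hτ => hτ.2.trans_lt hbt
  have hkernelDeriv : IntervalIntegrable (fun τ => α * (t - τ) ^ (-α - 1)) volume a b := by
    refine ContinuousOn.intervalIntegrable ?_
    rw [uIcc_of_le hab]
    exact continuousOn_const.mul ((continuousOn_const.sub continuousOn_id).rpow_const
      fun τ hτ => Or.inl (sub_pos.2 (hlt τ hτ)).ne')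
  rw [intervalIntegral.integral_mul_deriv_eq_deriv_mul
      (fun τ hτ => hasDerivAt_sub_rpow_neg (hlt τ (uIcc_of_le hab ▸ hτ)))
      (fun τ hτ => hf τ (uIcc_of_le hab ▸ hτ)) hkernelDeriv hf',
    Real.rpow_neg (sub_pos.2 hbt).le, Real.rpow_neg (sub_pos.2 (hab.trans_lt hbt)).le]
  simp only [mul_assoc, intervalIntegral.integral_const_mul]
  ring

end PowerKernel

theorem stmt19_general (α ω t₀ t : ℝ) (hα1 : α < 1) (hω : 0 < ω)
    (x : ℝ → ℝ) (hx : ContDiffOn ℝ 1 x (Set.Ici (t₀ - ω))) (ht : t > t₀ + ω) :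
    (1 / Real.Gamma (1 - α)) * ∫ τ in t₀..t, (t - τ) ^ (-α) * deriv x τ
      = ((1 / Real.Gamma (1 - α)) * ∫ τ in (t - ω)..t, (t - τ) ^ (-α) * deriv x τ)
        + (1 / Real.Gamma (1 - α)) *
            (x (t - ω) / ω ^ α - x t₀ / (t - t₀) ^ α
              - α * ∫ τ in t₀..(t - ω), (t - τ) ^ (-α - 1) * x τ) := by
  have hx' : ContDiffOn ℝ 1 x (Ioi (t₀ - ω)) := hx.mono Ioi_subset_Ici_self
  have hderiv : ∀ τ ∈ Ioi (t₀ - ω), HasDerivAt x (deriv x τ) τ := fun τ hτ =>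
    ((hx'.differentiableOn one_ne_zero τ hτ).differentiableAt (isOpen_Ioi.mem_nhds hτ)).hasDerivAt
  have hcont : ContinuousOn (deriv x) (Ioi (t₀ - ω)) :=
    hx'.continuousOn_deriv_of_isOpen isOpen_Ioi le_rfl
  have hsub : Icc t₀ t ⊆ Ioi (t₀ - ω) := fun τ hτ => by simp only [mem_Ioi]; linarith [hτ.1]
  have hint : IntervalIntegrable (fun τ => (t - τ) ^ (-α) * deriv x τ) volume t₀ t :=
    intervalIntegrable_sub_rpow_mul (by linarith)
      (hcont.mono (uIcc_of_le (by linarith : t₀ ≤ t) ▸ hsub))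
  have hmid : t - ω ∈ uIcc t₀ t := by rw [uIcc_of_le (by linarith)]; constructor <;> linarith
  rw [← intervalIntegral.integral_add_adjacent_intervals
      (hint.mono_set (uIcc_subset_uIcc_left hmid)) (hint.mono_set (uIcc_subset_uIcc_right hmid)),
    integral_sub_rpow_neg_mul_deriv (by linarith) (by linarith)
      (fun τ hτ => hderiv τ (hsub ⟨hτ.1, by linarith [hτ.2]⟩))
      ((hcont.mono fun τ hτ => hsub ⟨hτ.1, by linarith [hτ.2]⟩).intervalIntegrable_of_Icc
        (by linarith)),
    sub_sub_cancel]
  ring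

theorem stmt19 (α ω t₀ t : ℝ) (hα0 : 0 < α) (hα1 : α < 1) (hω : 0 < ω)
    (x : ℝ → ℝ) (hx : ContDiffOn ℝ 1 x (Set.Ici (t₀ - ω))) (ht : t > t₀ + ω) :
    (1 / Real.Gamma (1 - α)) * ∫ τ in t₀..t, (t - τ) ^ (-α) * deriv x τ
      = ((1 / Real.Gamma (1 - α)) * ∫ τ in (t - ω)..t, (t - τ) ^ (-α) * deriv x τ)
        + (1 / Real.Gamma (1 - α)) *
            (x (t - ω) / ω ^ α - x t₀ / (t - t₀) ^ α
              - α * ∫ τ in t₀..(t - ω), (t - τ) ^ (-α - 1) * x τ) :=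
  stmt19_general α ω t₀ t hα1 hω x hx ht
end
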